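/- For every heavy directed edge (v,w) of G (i.e., d(v) > θ and w a neighbor of v), the probability that Algorithm 1 outputs (v,w) equals exactly (2/3) · (d_ℓ(v)/d(v)) · (1/(nθ)), where θ = ⌈√(6m)⌉ and d_ℓ(v) is the number of light neighbors of v. -/

import Mathlib

/-!
An output `(v, w)` with `v` heavy cannot come from the branch `B = 1`, whose first vertex is the
light vertex `u`. In the branch `B = 0` (probability `2/3`) it arises exactly when `u` is a light
neighbor of `v`, `j` is the unique index with `nbr u j = v` (which is `< d(u) ≤ θ`, so it is
drawn with probability `1/θ`), and then `w` is drawn among the `d(v)` neighbors of `v`. Summing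
over the `d_ℓ(v)` light neighbors `u`, each drawn with probability `1/n`, gives the formula.
-/

open scoped ENNReal

/-- **Algorithm 1** of Eden–Rosenbaum / Tětek–Thorup, as a probability mass function on
`Option (V × V)`: draw `u` uniformly from `V`, draw `j` uniformly from `{0, …, θ−1}`,
and draw `B ∈ {0,1}` with `P(B = 1) = 1/3`, independently; if `d(u) > θ` or `j ≥ d(u)`,
output `none` (Fail); otherwise set `v = nbr u j`; if `B = 1`, output the directed edge
`(u, v)`; if `B = 0` and `v` is heavy (`d(v) > θ`), draw `w` uniformly from the neighbors
of `v` and output `(v, w)`; in all other cases output `none`. -/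
noncomputable def alg1 {V : Type*} [Fintype V] [DecidableEq V] [Nonempty V]
    (G : SimpleGraph V) [DecidableRel G.Adj] (θ : ℕ) (hθ : 0 < θ)
    (nbr : V → ℕ → V) : PMF (Option (V × V)) :=
  (PMF.uniformOfFintype V).bind fun u =>
    (PMF.uniformOfFinset (Finset.range θ) (Finset.nonempty_range_iff.mpr hθ.ne')).bind
      fun j =>
        (PMF.bernoulli (1 / 3) (by first | (rw [← NNReal.coe_le_coe]; norm_num) | (rw [div_le_one₀ (by norm_num)]; norm_num))).bind fun B =>
          if θ < G.degree u ∨ G.degree u ≤ j then PMF.pure none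
          else
            if B then PMF.pure (some (u, nbr u j))
            else
              if h : θ < G.degree (nbr u j) then
                (PMF.uniformOfFinset (G.neighborFinset (nbr u j))
                  (Finset.card_pos.mp (Nat.lt_of_le_of_lt (Nat.zero_le θ) h))).bind
                  fun w => PMF.pure (some (nbr u j, w))
              else PMF.pure none

open Finset

namespace PMF

variable {α β : Type*}

theorem uniformOfFinset_bind_apply (s : Finset α) (hs : s.Nonempty) (f : α → PMF β) (b : β) :
    (uniformOfFinset s hs).bind f b = (#s : ℝ≥0∞)⁻¹ * ∑ a ∈ s, f a b := by
  rw [bind_apply, tsum_eq_sum fun a ha => by rw [uniformOfFinset_apply_of_notMem _ ha, zero_mul],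
    mul_sum]
  exact sum_congr rfl fun a ha => by rw [uniformOfFinset_apply_of_mem hs ha]

theorem uniformOfFintype_bind_apply [Fintype α] [Nonempty α] (f : α → PMF β) (b : β) :
    (uniformOfFintype α).bind f b = (Fintype.card α : ℝ≥0∞)⁻¹ * ∑ a, f a b := by
  simp only [bind_apply, tsum_fintype, uniformOfFintype_apply, mul_sum]

theorem bernoulli_bind_apply {p : NNReal} (h : p ≤ 1) (f : Bool → PMF β) (b : β) :
    (bernoulli p h).bind f b = p * f true b + ((1 - p : NNReal) : ℝ≥0∞) * f false b := by
  rw [bind_apply, tsum_bool, bernoulli_apply, bernoulli_apply, add_comm]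
  rfl

theorem uniformOfFinset_bind_pure_some_apply [DecidableEq α] [DecidableEq β] (x : α)
    (s : Finset β) (hs : s.Nonempty) (y : α) (b : β) :
    ((uniformOfFinset s hs).bind fun b' => pure (some (x, b'))) (some (y, b))
      = if x = y ∧ b ∈ s then (#s : ℝ≥0∞)⁻¹ else 0 := by
  rw [uniformOfFinset_bind_apply]
  simp only [pure_apply, Option.some.injEq, Prod.mk.injEq]
  by_cases hxy : x = y
  · simp [hxy]
  · simp [hxy, Ne.symm hxy]

end PMF

theorem Set.BijOn.sum_range_ite_eq {β M : Type*} [AddCommMonoid M] [DecidableEq β]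
    {f : ℕ → β} {d n : ℕ} {t : Set β} (hf : Set.BijOn f (Set.Iio d) t) (hdn : d ≤ n)
    (y : β) (c : M) [Decidable (y ∈ t)] :
    ∑ j ∈ Finset.range n, (if j < d ∧ f j = y then c else 0) = if y ∈ t then c else 0 := by
  split_ifs with hy
  · obtain ⟨j₀, hj₀, rfl⟩ := hf.surjOn hy
    rw [sum_eq_single_of_mem j₀ (Finset.mem_range.2 (lt_of_lt_of_le (Set.mem_Iio.1 hj₀) hdn)),
      if_pos ⟨hj₀, rfl⟩]
    rintro j - hj
    exact if_neg fun (h : j < d ∧ f j = f j₀) => hj (hf.injOn h.1 hj₀ h.2)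
  · exact sum_eq_zero fun j _ => if_neg fun (h : j < d ∧ f j = y) => hy (h.2 ▸ hf.mapsTo h.1)

namespace SimpleGraph

variable {V : Type*} [Fintype V] (G : SimpleGraph V) [DecidableRel G.Adj]

def lightNeighborFinset (θ : ℕ) (v : V) : Finset V :=
  (G.neighborFinset v).filter fun x => G.degree x ≤ θ

noncomputable def alg1Step (θ : ℕ) (nbr : V → ℕ → V) (u : V) (j : ℕ) (B : Bool) :
    PMF (Option (V × V)) :=
  if θ < G.degree u ∨ G.degree u ≤ j then PMF.pure none
  else if B then PMF.pure (some (u, nbr u j))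
  else if h : θ < G.degree (nbr u j) then
    (PMF.uniformOfFinset (G.neighborFinset (nbr u j))
      (Finset.card_pos.mp (Nat.lt_of_le_of_lt (Nat.zero_le θ) h))).bind
      fun w => PMF.pure (some (nbr u j, w))
  else PMF.pure none

variable {G} {θ : ℕ} {nbr : V → ℕ → V} {v w : V}

theorem alg1Step_true_apply_of_lt_degree (hv : θ < G.degree v) (u : V) (j : ℕ) :
    G.alg1Step θ nbr u j true (some (v, w)) = 0 := by
  unfold alg1Step
  by_cases hfail : θ < G.degree u ∨ G.degree u ≤ j
  · rw [if_pos hfail, PMF.pure_apply, if_neg (Option.some_ne_none _)]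
  · rw [if_neg hfail, if_pos rfl, PMF.pure_apply, if_neg]
    rintro ⟨rfl, -⟩
    exact hfail (Or.inl hv)

theorem alg1Step_false_apply_of_lt_degree [DecidableEq V] (hvw : G.Adj v w) (hv : θ < G.degree v)
    (u : V) (j : ℕ) :
    G.alg1Step θ nbr u j false (some (v, w))
      = if G.degree u ≤ θ ∧ j < G.degree u ∧ nbr u j = v
        then (G.degree v : ℝ≥0∞)⁻¹ else 0 := by
  unfold alg1Step
  by_cases hfail : θ < G.degree u ∨ G.degree u ≤ j
  · rw [if_pos hfail, if_neg (by omega), PMF.pure_apply, if_neg (Option.some_ne_none _)]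
  · rw [if_neg hfail, if_neg Bool.false_ne_true]
    by_cases hx : nbr u j = v
    · rw [dif_pos (hx ▸ hv), PMF.uniformOfFinset_bind_pure_some_apply,
        if_pos ⟨hx, (G.mem_neighborFinset _ _).2 (hx ▸ hvw)⟩,
        if_pos ⟨by omega, by omega, hx⟩, hx, card_neighborFinset_eq_degree]
    · rw [if_neg fun h => hx h.2.2]
      split_ifs
      · rw [PMF.uniformOfFinset_bind_pure_some_apply, if_neg fun h => hx h.1]
      · rw [PMF.pure_apply, if_neg (Option.some_ne_none _)]

theorem bernoulli_bind_alg1Step_apply_of_lt_degree [DecidableEq V] (hvw : G.Adj v w)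
    (hv : θ < G.degree v) (h : (1 / 3 : NNReal) ≤ 1) (u : V) (j : ℕ) :
    (PMF.bernoulli (1 / 3) h).bind (G.alg1Step θ nbr u j) (some (v, w))
      = if G.degree u ≤ θ ∧ j < G.degree u ∧ nbr u j = v
        then 2 / 3 * (G.degree v : ℝ≥0∞)⁻¹ else 0 := by
  have h23 : ((1 - 1 / 3 : NNReal) : ℝ≥0∞) = 2 / 3 := by
    rw [tsub_eq_of_eq_add (show (1 : NNReal) = 2 / 3 + 1 / 3 by norm_num)]
    norm_num
  rw [PMF.bernoulli_bind_apply, alg1Step_true_apply_of_lt_degree hv,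
    alg1Step_false_apply_of_lt_degree hvw hv, mul_zero, zero_add, mul_ite, mul_zero, h23]

theorem sum_range_ite_nbr_eq [DecidableEq V] {u : V}
    (hnbr : Set.BijOn (nbr u) (Set.Iio (G.degree u)) (G.neighborSet u)) (c : ℝ≥0∞) :
    ∑ j ∈ range θ, (if G.degree u ≤ θ ∧ j < G.degree u ∧ nbr u j = v then c else 0)
      = if u ∈ G.lightNeighborFinset θ v then c else 0 := by
  by_cases hu : G.degree u ≤ θ
  · simp only [hu, true_and, hnbr.sum_range_ite_eq hu, lightNeighborFinset, mem_filter,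
      mem_neighborFinset, mem_neighborSet, adj_comm, and_true]
  · simp [hu, lightNeighborFinset]

theorem alg1_apply_of_lt_degree [DecidableEq V] [Nonempty V] (hθ : 0 < θ)
    (hnbr : ∀ u, Set.BijOn (nbr u) (Set.Iio (G.degree u)) (G.neighborSet u))
    (hvw : G.Adj v w) (hv : θ < G.degree v) :
    alg1 G θ hθ nbr (some (v, w))
      = 2 / 3 * ((#(G.lightNeighborFinset θ v) : ℝ≥0∞) / G.degree v)
          * (1 / ((Fintype.card V : ℝ≥0∞) * θ)) := by
  have halg : alg1 G θ hθ nbr = (PMF.uniformOfFintype V).bind fun u =>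
      (PMF.uniformOfFinset (range θ) (nonempty_range_iff.2 hθ.ne')).bind fun j =>
        (PMF.bernoulli (1 / 3) (div_le_one_of_le₀ (by norm_num) (by norm_num))).bind
          (G.alg1Step θ nbr u j) := rfl
  rw [halg, PMF.uniformOfFintype_bind_apply]
  simp only [PMF.uniformOfFinset_bind_apply, bernoulli_bind_alg1Step_apply_of_lt_degree hvw hv,
    sum_range_ite_nbr_eq (hnbr _), card_range, ← mul_sum, sum_ite_mem, univ_inter, sum_const,
    nsmul_eq_mul]
  rw [div_eq_mul_inv _ (G.degree v : ℝ≥0∞), one_div,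
    ENNReal.mul_inv (Or.inr (ENNReal.natCast_ne_top θ)) (Or.inl (ENNReal.natCast_ne_top _))]
  ring

end SimpleGraph

/-- For every heavy directed edge `(v,w)` of `G` (i.e., `d(v) > θ` and
`w` a neighbor of `v`), the probability that Algorithm 1 outputs `(v,w)` equals exactly
`(2/3) · (d_ℓ(v)/d(v)) · (1/(nθ))`, where `θ = ⌈√(6m)⌉` and `d_ℓ(v)` is the number of
light neighbors of `v`. -/
theorem alg1_heavy_edge_prob {V : Type*} [Fintype V] [DecidableEq V] [Nonempty V]
    (G : SimpleGraph V) [DecidableRel G.Adj]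
    (hm : 1 ≤ G.edgeFinset.card)
    (θ : ℕ) (hθ : θ = ⌈Real.sqrt (6 * (G.edgeFinset.card : ℝ))⌉₊)
    (nbr : V → ℕ → V)
    (hnbr : ∀ u : V, Set.BijOn (nbr u) (Set.Iio (G.degree u)) (G.neighborSet u))
    (v w : V) (hvw : G.Adj v w) (hheavy : θ < G.degree v) :
    alg1 G θ
      (by subst hθ
          refine Nat.ceil_pos.mpr (Real.sqrt_pos.mpr ?_)
          exact_mod_cast Nat.mul_pos (by norm_num) hm)
      nbr (some (v, w))
      = (2 / 3)
          * ((((G.neighborFinset v).filter fun x => G.degree x ≤ θ).card : ℝ≥0∞)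
              / (G.degree v : ℝ≥0∞))
          * (1 / ((Fintype.card V : ℝ≥0∞) * (θ : ℝ≥0∞))) :=
  SimpleGraph.alg1_apply_of_lt_degree _ hnbr hvw hheavy
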